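/- Let Λ be a row-finite k-graph and {S_λ, S_{μ*}} a Cohn Λ-family in an R-algebra A. Then {S_λ, S_{μ*}} is a Kumjian-Pask Λ-family (i.e. ∏_{λ∈E}(S_v - S_λ S_{λ*}) = 0 for all v ∈ Λ⁰ and all finite exhaustive E ⊆ vΛ) if and only if ∏_{e∈E}(S_v - S_e S_{e*}) = 0 for all v ∈ Λ⁰ and all exhaustive sets E of edges E ⊆ vΛ¹. -/

import Mathlib

/-- A higher-rank graph (`k`-graph): a small category with a degree functor to `ℕ^k`
satisfying the factorisation property.  Paths and vertices live in one type `Path`;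
vertices are the paths of degree `0`. Composition is a total function which is only
meaningful on composable pairs. -/
structure KGraph (k : ℕ) where
  Path : Type
  src : Path → Path
  rng : Path → Path
  comp : Path → Path → Path
  deg : Path → Fin k → ℕ
  deg_src : ∀ a, deg (src a) = 0
  deg_rng : ∀ a, deg (rng a) = 0
  src_vertex : ∀ a, deg a = 0 → src a = a
  rng_vertex : ∀ a, deg a = 0 → rng a = a
  comp_assoc : ∀ a b c, src a = rng b → src b = rng c →
    comp (comp a b) c = comp a (comp b c)
  rng_comp : ∀ a b, src a = rng b → rng (comp a b) = rng a
  src_comp : ∀ a b, src a = rng b → src (comp a b) = src b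
  deg_comp : ∀ a b, src a = rng b → deg (comp a b) = deg a + deg b
  comp_rng_self : ∀ a, comp (rng a) a = a
  comp_src_self : ∀ a, comp a (src a) = a
  factor : ∀ a (m n : Fin k → ℕ), deg a = m + n →
    ∃! p : Path × Path, src p.1 = rng p.2 ∧ comp p.1 p.2 = a ∧
      deg p.1 = m ∧ deg p.2 = n

namespace KGraph

variable {k : ℕ}

/-- `v` is a vertex iff it has degree `0`. -/
def IsVertex (Λ : KGraph k) (v : Λ.Path) : Prop := Λ.deg v = 0

/-- The set `vΛ¹` of edges (paths of degree `e_i` for some `i`) with range `v`. -/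
def edgesAt (Λ : KGraph k) (v : Λ.Path) : Set Λ.Path :=
  {e | Λ.rng e = v ∧ ∃ i : Fin k, Λ.deg e = Pi.single i 1}

/-- `Λ` is row-finite: each vertex receives finitely many edges. -/
def RowFinite (Λ : KGraph k) : Prop := ∀ v, (Λ.edgesAt v).Finite

/-- `Λ` has no sources: `vΛ^m ≠ ∅` for every vertex `v` and every `m ∈ ℕ^k`. -/
def NoSources (Λ : KGraph k) : Prop :=
  ∀ v, Λ.IsVertex v → ∀ m : Fin k → ℕ, ∃ a, Λ.rng a = v ∧ Λ.deg a = m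

/-- `MCE(l, m)`: minimal common extensions of `l` and `m`. -/
def MCE (Λ : KGraph k) (l m : Λ.Path) : Set Λ.Path :=
  {t | Λ.deg t = Λ.deg l ⊔ Λ.deg m ∧
    (∃ ν, Λ.src l = Λ.rng ν ∧ Λ.comp l ν = t) ∧
    (∃ γ, Λ.src m = Λ.rng γ ∧ Λ.comp m γ = t)}

/-- `Λ^min(l, m)`: pairs `(ν, γ)` with `lν = mγ ∈ MCE(l, m)`. -/
def MinPairs (Λ : KGraph k) (l m : Λ.Path) : Set (Λ.Path × Λ.Path) :=
  {p | Λ.src l = Λ.rng p.1 ∧ Λ.src m = Λ.rng p.2 ∧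
    Λ.comp l p.1 = Λ.comp m p.2 ∧ Λ.comp l p.1 ∈ Λ.MCE l m}

/-- `E ⊆ vΛ` is exhaustive if every path with range `v` has a common extension with
some member of `E`. -/
def IsExhaustive (Λ : KGraph k) (v : Λ.Path) (E : Set Λ.Path) : Prop :=
  ∀ a, Λ.rng a = v → ∃ μ ∈ E, (Λ.MinPairs a μ).Nonempty

end KGraph

/-- A Cohn `Λ`-family in a ring `A` : relations (CP1)–(CP3). -/
structure IsCohnFamily {k : ℕ} (Λ : KGraph k) (A : Type) [Ring A]
    (T Ts : Λ.Path → A) : Prop where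
  ghost_vertex : ∀ v, Λ.IsVertex v → Ts v = T v
  vertex_idem : ∀ v, Λ.IsVertex v → T v * T v = T v
  vertex_orth : ∀ v w, Λ.IsVertex v → Λ.IsVertex w → v ≠ w → T v * T w = 0
  mul_comp : ∀ a b, Λ.src a = Λ.rng b → T a * T b = T (Λ.comp a b)
  ghost_mul_comp : ∀ a b, Λ.src a = Λ.rng b → Ts b * Ts a = Ts (Λ.comp a b)
  cp3 : ∀ a b, Ts a * T b = ∑ᶠ p ∈ Λ.MinPairs a b, T p.1 * Ts p.2

/-- Product of the images of the elements of a finset, in some fixed enumeration.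
(The products we take are over pairwise-commuting factors, so the order is immaterial.) -/
noncomputable def listProd {A : Type} [Monoid A] {ι : Type} (s : Finset ι) (f : ι → A) : A :=
  (s.toList.map f).prod

/-- `F_{T,v} := T_v - ∏_{e ∈ vΛ¹} (T_v - T_e T_{e*})`. -/
noncomputable def FF {k : ℕ} (Λ : KGraph k) (hrf : Λ.RowFinite) {A : Type} [Ring A]
    (T Ts : Λ.Path → A) (v : Λ.Path) : A :=
  T v - listProd (hrf v).toFinset (fun e => T v - T e * Ts e)

/-! If `v ∈ E` the product vanishes. Otherwise the first edges `f` of the paths in `E` form an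
exhaustive set `F ⊆ vΛ¹`. Writing `X = ∏_{λ∈E}(S_v - S_λ S_{λ*})`, (CP3) gives
`X S_f = S_f ∏_{λ∈E} R_λ` with `R_λ = S_{s(f)} - ∑_{ν ∈ Ext(f; {λ})} S_ν S_{ν*}`, and `R_λ` absorbs
each `S_{s(f)} - S_ν S_{ν*}` with `ν ∈ Ext(f; {λ})`, because these `ν` share a degree and so the
`S_ν S_{ν*}` are orthogonal idempotents. Hence `∏ R_λ` is annihilated by the product over
`Ext(f; E)`, a finite exhaustive set at `s(f)` whose degrees are bounded by
`sup_{λ∈E} d(λ) - d(f)`; by induction on that bound, `X S_f = 0`. So every factor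
`S_v - S_f S_{f*}`, `f ∈ F`, fixes `X`, and `X = X ∏_{f∈F}(S_v - S_f S_{f*}) = 0`. -/

lemma Pi.single_one_le {ι : Type} [DecidableEq ι] {m : ι → ℕ} {i : ι} (hi : 1 ≤ m i) :
    Pi.single i 1 ≤ m := by
  intro j
  by_cases hj : j = i
  · subst hj; simpa using hi
  · simp [hj]

lemma Pi.exists_single_one_le {ι : Type} [DecidableEq ι] {m : ι → ℕ} (hm : m ≠ 0) :
    ∃ i, Pi.single i 1 ≤ m := by
  obtain ⟨i, hi⟩ := Function.ne_iff.1 hm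
  exact ⟨i, Pi.single_one_le (Nat.one_le_iff_ne_zero.2 hi)⟩

lemma Pi.tsub_lt_self {ι : Type} {m n : ι → ℕ} (hnm : n ≤ m) (hn : n ≠ 0) : m - n < m := by
  obtain ⟨i, hi⟩ := Function.ne_iff.1 hn
  have : n i ≤ m i := hnm i
  refine Pi.lt_def.2 ⟨tsub_le_self, i, ?_⟩
  simp only [Pi.sub_apply, Pi.zero_apply] at hi ⊢
  omega

lemma listProd_eq_zero {A ι : Type} [MonoidWithZero A] {s : Finset ι} {f : ι → A} {a : ι}
    (ha : a ∈ s) (h : f a = 0) : listProd s f = 0 :=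
  List.prod_eq_zero (List.mem_map.2 ⟨a, Finset.mem_toList.2 ha, h⟩)

section ListProd

variable {A ι : Type} [Monoid A] {s : Finset ι} {f g : ι → A} {x : A}

lemma mul_listProd_eq_self (h : ∀ a ∈ s, x * f a = x) : x * listProd s f = x := by
  refine List.prod_induction (fun y => x * y = x) (fun y z hy hz => ?_) (mul_one x) ?_
  · rw [← mul_assoc, hy, hz]
  · simpa using h

lemma List.prod_map_mul_eq_mul_prod_map {l : List ι} (h : ∀ a ∈ l, f a * x = x * g a) :
    (l.map f).prod * x = x * (l.map g).prod := by
  induction l with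
  | nil => simp
  | cons a l ih =>
    rw [List.map_cons, List.map_cons, List.prod_cons, List.prod_cons, mul_assoc,
      ih fun b hb => h b (List.mem_cons_of_mem a hb), ← mul_assoc, h a List.mem_cons_self,
      mul_assoc]

lemma listProd_mul_eq_mul_listProd (h : ∀ a ∈ s, f a * x = x * g a) :
    listProd s f * x = x * listProd s g :=
  List.prod_map_mul_eq_mul_prod_map (by simpa using h)

lemma List.prod_mul_eq_self_of_mem {l : List A} {y : A} (hy : y ∈ l) (hyx : y * x = y)
    (hcomm : ∀ z ∈ l, Commute z x) : l.prod * x = l.prod := by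
  induction l with
  | nil => cases hy
  | cons z l ih =>
    rw [List.prod_cons, mul_assoc]
    rcases List.mem_cons.1 hy with rfl | hy
    · rw [(Commute.list_prod_left l x fun z hz => hcomm z (List.mem_cons_of_mem _ hz)).eq,
        ← mul_assoc, hyx]
    · rw [ih hy fun z hz => hcomm z (List.mem_cons_of_mem _ hz)]

lemma listProd_mul_eq_self {a : ι} (ha : a ∈ s) (hax : f a * x = f a)
    (hcomm : ∀ b ∈ s, Commute (f b) x) : listProd s f * x = listProd s f :=
  List.prod_mul_eq_self_of_mem (List.mem_map.2 ⟨a, Finset.mem_toList.2 ha, rfl⟩) hax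
    (by simpa using hcomm)

end ListProd

namespace KGraph

variable {k : ℕ} (Λ : KGraph k)

lemma eq_and_eq_of_comp_eq {a b c d : Λ.Path} (hab : Λ.src a = Λ.rng b)
    (hcd : Λ.src c = Λ.rng d) (hac : Λ.deg a = Λ.deg c) (h : Λ.comp a b = Λ.comp c d) :
    a = c ∧ b = d := by
  have hbd : Λ.deg b = Λ.deg d := by
    have := Λ.deg_comp a b hab
    rw [h, Λ.deg_comp c d hcd, hac] at this
    exact (add_left_cancel this).symm
  obtain ⟨_, -, huniq⟩ := Λ.factor (Λ.comp a b) (Λ.deg a) (Λ.deg b) (Λ.deg_comp a b hab)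
  exact Prod.ext_iff.1 <| (huniq (a, b) ⟨hab, rfl, rfl, rfl⟩).trans
    (huniq (c, d) ⟨hcd, h.symm, hac.symm, hbd.symm⟩).symm

lemma exists_comp_of_le_deg {a : Λ.Path} {n : Fin k → ℕ} (hn : n ≤ Λ.deg a) :
    ∃ e r, Λ.src e = Λ.rng r ∧ Λ.comp e r = a ∧ Λ.deg e = n ∧ Λ.deg r = Λ.deg a - n := by
  obtain ⟨⟨e, r⟩, ⟨h, hcomp, he, hr⟩, -⟩ :=
    Λ.factor a n (Λ.deg a - n) (add_tsub_cancel_of_le hn).symm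
  exact ⟨e, r, h, hcomp, he, hr⟩

lemma exists_edge_comp {a : Λ.Path} (ha : Λ.deg a ≠ 0) :
    ∃ e ∈ Λ.edgesAt (Λ.rng a), ∃ r, Λ.src e = Λ.rng r ∧ Λ.comp e r = a := by
  obtain ⟨i, hi⟩ := Pi.exists_single_one_le ha
  obtain ⟨e, r, her, rfl, he, -⟩ := Λ.exists_comp_of_le_deg hi
  exact ⟨e, ⟨(Λ.rng_comp _ _ her).symm, i, he⟩, r, her, rfl⟩

lemma deg_ne_zero_of_mem_edgesAt {v e : Λ.Path} (he : e ∈ Λ.edgesAt v) : Λ.deg e ≠ 0 := by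
  obtain ⟨-, i, hi⟩ := he
  simp [hi]

lemma exists_comp_of_comp_eq_of_deg_le {a x t₁ t₂ : Λ.Path} (hax : Λ.src a = Λ.rng x)
    (ht : Λ.src t₁ = Λ.rng t₂) (h : Λ.comp a x = Λ.comp t₁ t₂) (hd : Λ.deg a ≤ Λ.deg t₁) :
    ∃ ν, Λ.src a = Λ.rng ν ∧ Λ.src ν = Λ.rng t₂ ∧ Λ.comp a ν = t₁ ∧ x = Λ.comp ν t₂ := by
  obtain ⟨a', ν, ha'ν, hcomp, hda', -⟩ := Λ.exists_comp_of_le_deg hd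
  have hνt : Λ.src ν = Λ.rng t₂ := by rw [← Λ.src_comp _ _ ha'ν, hcomp, ht]
  obtain ⟨rfl, rfl⟩ := Λ.eq_and_eq_of_comp_eq hax (by rw [Λ.rng_comp _ _ hνt]; exact ha'ν)
    hda'.symm (by rw [h, ← hcomp, Λ.comp_assoc _ _ _ ha'ν hνt])
  exact ⟨ν, ha'ν, hνt, hcomp, rfl⟩

lemma exists_mem_minPairs_of_comp_eq {a x b y : Λ.Path} (hax : Λ.src a = Λ.rng x)
    (hby : Λ.src b = Λ.rng y) (h : Λ.comp a x = Λ.comp b y) :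
    ∃ p ∈ Λ.MinPairs a b, ∃ t, Λ.src p.1 = Λ.rng t ∧ x = Λ.comp p.1 t := by
  have hdeg : Λ.deg a ⊔ Λ.deg b ≤ Λ.deg (Λ.comp a x) := by
    refine sup_le ?_ ?_
    · rw [Λ.deg_comp a x hax]; exact le_self_add
    · rw [h, Λ.deg_comp b y hby]; exact le_self_add
  obtain ⟨t₁, t₂, ht, hcomp, hd, -⟩ := Λ.exists_comp_of_le_deg hdeg
  obtain ⟨ν, haν, hνt, rfl, rfl⟩ :=
    Λ.exists_comp_of_comp_eq_of_deg_le hax ht hcomp.symm (hd ▸ le_sup_left)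
  obtain ⟨γ, hbγ, -, hbγt, -⟩ :=
    Λ.exists_comp_of_comp_eq_of_deg_le hby ht (h ▸ hcomp.symm) (hd ▸ le_sup_right)
  exact ⟨(ν, γ), ⟨haν, hbγ, hbγt.symm, hd, ⟨ν, haν, rfl⟩, ⟨γ, hbγ, hbγt⟩⟩, t₂, hνt, rfl⟩

lemma deg_add_deg_snd_of_mem_minPairs {a b : Λ.Path} {p : Λ.Path × Λ.Path}
    (hp : p ∈ Λ.MinPairs a b) : Λ.deg b + Λ.deg p.2 = Λ.deg a ⊔ Λ.deg b := by
  rw [← Λ.deg_comp b p.2 hp.2.1, ← hp.2.2.1, hp.2.2.2.1]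

lemma mem_minPairs_swap {a b : Λ.Path} {p : Λ.Path × Λ.Path} (hp : p ∈ Λ.MinPairs a b) :
    p.swap ∈ Λ.MinPairs b a := by
  obtain ⟨hp1, hp2, hpe, hdeg, -⟩ := hp
  refine ⟨hp2, hp1, hpe.symm, ?_, ⟨p.2, hp2, rfl⟩, ⟨p.1, hp1, hpe⟩⟩
  rw [Prod.fst_swap, ← hpe, hdeg, sup_comm]

lemma injOn_snd_minPairs (a b : Λ.Path) : Set.InjOn Prod.snd (Λ.MinPairs a b) := by
  intro p hp q hq h
  have hpq : Λ.comp a p.1 = Λ.comp a q.1 := by rw [hp.2.2.1, hq.2.2.1, h]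
  exact Prod.ext (Λ.eq_and_eq_of_comp_eq hp.1 hq.1 rfl hpq).2 h

lemma eq_and_eq_of_mem_minPairs_of_deg_eq {a b : Λ.Path} {p : Λ.Path × Λ.Path}
    (hp : p ∈ Λ.MinPairs a b) (hd : Λ.deg a = Λ.deg b) :
    a = b ∧ p = (Λ.src a, Λ.src a) := by
  have hp1 : Λ.deg p.1 = 0 := by
    have := Λ.deg_comp a p.1 hp.1
    rwa [hp.2.2.2.1, ← hd, sup_idem, eq_comm, add_eq_left] at this
  have hp2 : Λ.deg p.2 = 0 := by
    have := Λ.deg_add_deg_snd_of_mem_minPairs hp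
    rwa [← hd, sup_idem, hd, add_eq_left] at this
  have h1 : p.1 = Λ.src a := (Λ.rng_vertex _ hp1).symm.trans hp.1.symm
  have h2 : p.2 = Λ.src b := (Λ.rng_vertex _ hp2).symm.trans hp.2.1.symm
  have hab : a = b := by
    rw [← Λ.comp_src_self a, ← Λ.comp_src_self b, ← h1, ← h2, hp.2.2.1]
  subst hab
  exact ⟨rfl, Prod.ext h1 h2⟩

lemma minPairs_self (a : Λ.Path) : Λ.MinPairs a a = {(Λ.src a, Λ.src a)} := by
  have hsrc : Λ.src a = Λ.rng (Λ.src a) := (Λ.rng_vertex _ (Λ.deg_src a)).symm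
  ext p
  refine ⟨fun hp => (Λ.eq_and_eq_of_mem_minPairs_of_deg_eq hp rfl).2, ?_⟩
  rintro rfl
  exact ⟨hsrc, hsrc, rfl, by rw [Λ.comp_src_self, sup_idem], ⟨_, hsrc, rfl⟩, ⟨_, hsrc, rfl⟩⟩

lemma finite_setOf_rng_eq_deg_eq (hrf : Λ.RowFinite) (v : Λ.Path) (m : Fin k → ℕ) :
    {a | Λ.rng a = v ∧ Λ.deg a = m}.Finite := by
  induction m using WellFoundedLT.induction generalizing v with
  | _ m ih =>
  by_cases hm : m = 0
  · refine (Set.finite_singleton v).subset ?_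
    rintro a ⟨rfl, ha⟩
    exact (Λ.rng_vertex a (ha.trans hm)).symm
  obtain ⟨i, hi⟩ := Pi.exists_single_one_le hm
  have hlt : m - Pi.single i 1 < m := Pi.tsub_lt_self hi (by simp)
  refine ((hrf v).biUnion fun e _ => (ih _ hlt (Λ.src e)).image (Λ.comp e)).subset ?_
  rintro a ⟨rfl, rfl⟩
  obtain ⟨e, r, her, rfl, he, hr⟩ := Λ.exists_comp_of_le_deg hi
  exact Set.mem_biUnion (x := e) ⟨(Λ.rng_comp _ _ her).symm, i, he⟩ ⟨r, ⟨her.symm, hr⟩, rfl⟩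

lemma minPairs_finite (hrf : Λ.RowFinite) (a b : Λ.Path) : (Λ.MinPairs a b).Finite := by
  refine Set.Finite.of_finite_image ?_ (Λ.injOn_snd_minPairs a b)
  refine (Λ.finite_setOf_rng_eq_deg_eq hrf (Λ.src b) ((Λ.deg a ⊔ Λ.deg b) - Λ.deg b)).subset ?_
  rintro _ ⟨p, hp, rfl⟩
  exact ⟨hp.2.1.symm, (tsub_eq_of_eq_add_rev (Λ.deg_add_deg_snd_of_mem_minPairs hp).symm).symm⟩

open Classical in
/-- `Ext(f; {l})`: the `ν` with `(α, ν) ∈ Λ^min(l, f)`. -/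
noncomputable def minExt (hrf : Λ.RowFinite) (l f : Λ.Path) : Finset Λ.Path :=
  (Λ.minPairs_finite hrf l f).toFinset.image Prod.snd

open Classical in
/-- `Ext(f; E) = ⋃_{l ∈ E} Ext(f; {l})`. -/
noncomputable def extSet (hrf : Λ.RowFinite) (E : Finset Λ.Path) (f : Λ.Path) : Finset Λ.Path :=
  E.biUnion fun l => Λ.minExt hrf l f

variable {Λ} {hrf : Λ.RowFinite}

lemma mem_minExt {l f ν : Λ.Path} : ν ∈ Λ.minExt hrf l f ↔ ∃ α, (α, ν) ∈ Λ.MinPairs l f := by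
  simp [minExt]

lemma mem_extSet {E : Finset Λ.Path} {f ν : Λ.Path} :
    ν ∈ Λ.extSet hrf E f ↔ ∃ l ∈ E, ν ∈ Λ.minExt hrf l f := by
  simp [extSet]

lemma rng_of_mem_minExt {l f ν : Λ.Path} (hν : ν ∈ Λ.minExt hrf l f) : Λ.rng ν = Λ.src f := by
  obtain ⟨α, hα⟩ := mem_minExt.1 hν
  exact hα.2.1.symm

lemma rng_of_mem_extSet {E : Finset Λ.Path} {f ν : Λ.Path} (hν : ν ∈ Λ.extSet hrf E f) :
    Λ.rng ν = Λ.src f := by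
  obtain ⟨l, -, hν⟩ := mem_extSet.1 hν
  exact rng_of_mem_minExt hν

lemma deg_add_deg_of_mem_minExt {l f ν : Λ.Path} (hν : ν ∈ Λ.minExt hrf l f) :
    Λ.deg f + Λ.deg ν = Λ.deg l ⊔ Λ.deg f := by
  obtain ⟨α, hα⟩ := mem_minExt.1 hν
  exact Λ.deg_add_deg_snd_of_mem_minPairs hα

lemma deg_eq_of_mem_minExt {l f μ ν : Λ.Path} (hμ : μ ∈ Λ.minExt hrf l f)
    (hν : ν ∈ Λ.minExt hrf l f) : Λ.deg μ = Λ.deg ν :=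
  add_left_cancel ((deg_add_deg_of_mem_minExt hμ).trans (deg_add_deg_of_mem_minExt hν).symm)

lemma IsExhaustive.of_forall_mem_comp {v : Λ.Path} {E F : Set Λ.Path}
    (hE : Λ.IsExhaustive v E)
    (hF : ∀ l ∈ E, ∃ e ∈ F, ∃ r, Λ.src e = Λ.rng r ∧ Λ.comp e r = l) :
    Λ.IsExhaustive v F := by
  intro a ha
  obtain ⟨l, hl, p, hp1, hp2, hp, -⟩ := hE a ha
  obtain ⟨e, he, r, her, rfl⟩ := hF l hl
  have hrp : Λ.src r = Λ.rng p.2 := by rw [← Λ.src_comp _ _ her]; exact hp2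
  obtain ⟨q, hq, -⟩ := Λ.exists_mem_minPairs_of_comp_eq hp1
    (by rw [Λ.rng_comp _ _ hrp]; exact her) (hp.trans (Λ.comp_assoc _ _ _ her hrp))
  exact ⟨e, he, q, hq⟩

lemma IsExhaustive.extSet {v f : Λ.Path} {E : Finset Λ.Path} (hE : Λ.IsExhaustive v ↑E)
    (hf : Λ.rng f = v) : Λ.IsExhaustive (Λ.src f) ↑(Λ.extSet hrf E f) := by
  intro a ha
  obtain ⟨l, hl, p, hp1, hp2, hp, -⟩ := hE (Λ.comp f a) (by rw [Λ.rng_comp _ _ ha.symm, hf])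
  have hap : Λ.src a = Λ.rng p.1 := by rw [← Λ.src_comp _ _ ha.symm]; exact hp1
  obtain ⟨q, hq, t, hqt, hat⟩ := Λ.exists_mem_minPairs_of_comp_eq
    (by rw [Λ.rng_comp _ _ hap]; exact ha.symm) hp2
    (by rw [← Λ.comp_assoc _ _ _ ha.symm hap]; exact hp)
  obtain ⟨q', hq', -⟩ := Λ.exists_mem_minPairs_of_comp_eq hap hqt hat
  exact ⟨q.1, mem_extSet.2 ⟨l, hl, mem_minExt.2 ⟨q.2, Λ.mem_minPairs_swap hq⟩⟩, q', hq'⟩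

lemma extSet_sup_deg_lt {E : Finset Λ.Path} {f r : Λ.Path} (hl : Λ.comp f r ∈ E)
    (hfr : Λ.src f = Λ.rng r) (hf : Λ.deg f ≠ 0) :
    (Λ.extSet hrf E f).sup Λ.deg < E.sup Λ.deg := by
  have hfE : Λ.deg f ≤ E.sup Λ.deg :=
    (Λ.deg_comp f r hfr ▸ le_self_add).trans (Finset.le_sup hl)
  refine lt_of_le_of_lt (Finset.sup_le fun ν hν => ?_) (Pi.tsub_lt_self hfE hf)
  obtain ⟨l', hl', hν⟩ := mem_extSet.1 hν
  exact le_tsub_of_add_le_left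
    ((deg_add_deg_of_mem_minExt hν).trans_le (sup_le (Finset.le_sup hl') hfE))

end KGraph

namespace IsCohnFamily

variable {k : ℕ} {Λ : KGraph k} {A : Type} [Ring A] {S Ss : Λ.Path → A}

lemma rng_mul (hS : IsCohnFamily Λ A S Ss) (a : Λ.Path) : S (Λ.rng a) * S a = S a := by
  rw [hS.mul_comp _ _ (Λ.src_vertex _ (Λ.deg_rng a)), Λ.comp_rng_self]

lemma mul_src (hS : IsCohnFamily Λ A S Ss) (a : Λ.Path) : S a * S (Λ.src a) = S a := by
  rw [hS.mul_comp _ _ (Λ.rng_vertex _ (Λ.deg_src a)).symm, Λ.comp_src_self]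

lemma ghost_mul_rng (hS : IsCohnFamily Λ A S Ss) (a : Λ.Path) : Ss a * S (Λ.rng a) = Ss a := by
  rw [← hS.ghost_vertex _ (Λ.deg_rng a), hS.ghost_mul_comp _ _ (Λ.src_vertex _ (Λ.deg_rng a)),
    Λ.comp_rng_self]

lemma src_mul_ghost (hS : IsCohnFamily Λ A S Ss) (a : Λ.Path) : S (Λ.src a) * Ss a = Ss a := by
  rw [← hS.ghost_vertex _ (Λ.deg_src a),
    hS.ghost_mul_comp _ _ (Λ.rng_vertex _ (Λ.deg_src a)).symm, Λ.comp_src_self]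

lemma ghost_mul_self (hS : IsCohnFamily Λ A S Ss) (a : Λ.Path) : Ss a * S a = S (Λ.src a) := by
  rw [hS.cp3, Λ.minPairs_self, finsum_mem_singleton, hS.ghost_vertex _ (Λ.deg_src a),
    hS.vertex_idem _ (Λ.deg_src a)]

lemma ghost_mul_eq_zero (hS : IsCohnFamily Λ A S Ss) {a b : Λ.Path} (hd : Λ.deg a = Λ.deg b)
    (hne : a ≠ b) : Ss a * S b = 0 := by
  rw [hS.cp3, Set.eq_empty_of_forall_notMem fun p hp =>
    hne (Λ.eq_and_eq_of_mem_minPairs_of_deg_eq hp hd).1, finsum_mem_empty]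

lemma ghost_mul_eq_sum (hrf : Λ.RowFinite) (hS : IsCohnFamily Λ A S Ss) (a b : Λ.Path) :
    Ss a * S b = ∑ p ∈ (Λ.minPairs_finite hrf a b).toFinset, S p.1 * Ss p.2 := by
  rw [hS.cp3, finsum_mem_eq_finite_toFinset_sum]

lemma proj_mul_proj (hrf : Λ.RowFinite) (hS : IsCohnFamily Λ A S Ss) (a b : Λ.Path) :
    S a * Ss a * (S b * Ss b) =
      ∑ p ∈ (Λ.minPairs_finite hrf a b).toFinset, S (Λ.comp a p.1) * Ss (Λ.comp a p.1) := by
  rw [mul_assoc, ← mul_assoc (Ss a), hS.ghost_mul_eq_sum hrf, Finset.sum_mul, Finset.mul_sum]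
  refine Finset.sum_congr rfl fun p hp => ?_
  obtain ⟨h1, h2, h, -⟩ := (Set.Finite.mem_toFinset _).1 hp
  rw [mul_assoc (S p.1), ← mul_assoc (S a), hS.mul_comp _ _ h1, hS.ghost_mul_comp _ _ h2, ← h]

lemma commute_proj (hrf : Λ.RowFinite) (hS : IsCohnFamily Λ A S Ss) (a b : Λ.Path) :
    Commute (S a * Ss a) (S b * Ss b) := by
  rw [Commute, SemiconjBy, hS.proj_mul_proj hrf, hS.proj_mul_proj hrf]
  refine Finset.sum_nbij' Prod.swap Prod.swap (fun p hp => ?_) (fun p hp => ?_)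
    (fun p _ => p.swap_swap) (fun p _ => p.swap_swap) fun p hp => ?_
  · simpa using Λ.mem_minPairs_swap (by simpa using hp)
  · simpa using Λ.mem_minPairs_swap (by simpa using hp)
  · rw [((Set.Finite.mem_toFinset _).1 hp).2.2.1, Prod.fst_swap]

lemma vertex_mul_proj (hS : IsCohnFamily Λ A S Ss) {a w : Λ.Path} (h : Λ.rng a = w) :
    S w * (S a * Ss a) = S a * Ss a := by
  subst h; rw [← mul_assoc, hS.rng_mul]

lemma proj_mul_vertex (hS : IsCohnFamily Λ A S Ss) {a w : Λ.Path} (h : Λ.rng a = w) :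
    S a * Ss a * S w = S a * Ss a := by
  subst h; rw [mul_assoc, hS.ghost_mul_rng]

lemma commute_vertex_proj (hS : IsCohnFamily Λ A S Ss) {a w : Λ.Path} (h : Λ.rng a = w) :
    Commute (S w) (S a * Ss a) :=
  (hS.vertex_mul_proj h).trans (hS.proj_mul_vertex h).symm

lemma sum_proj_mul_proj (hS : IsCohnFamily Λ A S Ss) {s : Finset Λ.Path} {ν : Λ.Path}
    (hν : ν ∈ s) (hd : ∀ μ ∈ s, Λ.deg μ = Λ.deg ν) :
    (∑ μ ∈ s, S μ * Ss μ) * (S ν * Ss ν) = S ν * Ss ν := by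
  rw [Finset.sum_mul, Finset.sum_eq_single_of_mem ν hν fun μ hμ hne => ?_, mul_assoc,
    ← mul_assoc (Ss ν), hS.ghost_mul_self, hS.src_mul_ghost]
  rw [mul_assoc, ← mul_assoc (Ss μ), hS.ghost_mul_eq_zero (hd μ hμ) hne, zero_mul, mul_zero]

lemma sub_proj_mul_eq_mul_sub_sum (hrf : Λ.RowFinite) (hS : IsCohnFamily Λ A S Ss)
    {v l f : Λ.Path} (hf : Λ.rng f = v) :
    (S v - S l * Ss l) * S f = S f * (S (Λ.src f) - ∑ ν ∈ Λ.minExt hrf l f, S ν * Ss ν) := by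
  have hsum : S l * (Ss l * S f) = S f * ∑ ν ∈ Λ.minExt hrf l f, S ν * Ss ν := by
    classical
    rw [hS.ghost_mul_eq_sum hrf, Finset.mul_sum, KGraph.minExt,
      Finset.sum_image (by simpa using Λ.injOn_snd_minPairs l f), Finset.mul_sum]
    refine Finset.sum_congr rfl fun p hp => ?_
    obtain ⟨h1, h2, h, -⟩ := (Set.Finite.mem_toFinset _).1 hp
    rw [← mul_assoc, hS.mul_comp _ _ h1, h, ← hS.mul_comp _ _ h2, mul_assoc]
  rw [sub_mul, mul_sub, ← hf, hS.rng_mul, hS.mul_src, mul_assoc, hsum]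

lemma sub_sum_proj_mul_sub_proj (hrf : Λ.RowFinite) (hS : IsCohnFamily Λ A S Ss)
    {l f ν : Λ.Path} (hν : ν ∈ Λ.minExt hrf l f) :
    (S (Λ.src f) - ∑ μ ∈ Λ.minExt hrf l f, S μ * Ss μ) * (S (Λ.src f) - S ν * Ss ν) =
      S (Λ.src f) - ∑ μ ∈ Λ.minExt hrf l f, S μ * Ss μ := by
  rw [mul_sub, sub_mul, sub_mul, hS.vertex_idem _ (Λ.deg_src f), Finset.sum_mul,
    Finset.sum_congr rfl fun μ hμ => hS.proj_mul_vertex (KGraph.rng_of_mem_minExt hμ),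
    hS.vertex_mul_proj (KGraph.rng_of_mem_minExt hν),
    hS.sum_proj_mul_proj hν fun μ hμ => KGraph.deg_eq_of_mem_minExt hμ hν, sub_self, sub_zero]

lemma listProd_sub_proj_mul_vertex (hS : IsCohnFamily Λ A S Ss)
    {v : Λ.Path} (hv : Λ.IsVertex v) {E : Finset Λ.Path} (hE : ∀ a ∈ E, Λ.rng a = v)
    (hne : E.Nonempty) :
    listProd E (fun a => S v - S a * Ss a) * S v = listProd E (fun a => S v - S a * Ss a) := by
  obtain ⟨μ, hμ⟩ := hne
  refine listProd_mul_eq_self hμ ?_ fun a ha =>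
    (Commute.refl _).sub_left (hS.commute_vertex_proj (hE a ha)).symm
  rw [sub_mul, hS.vertex_idem v hv, hS.proj_mul_vertex (hE μ hμ)]

lemma listProd_mul_eq_zero_of_extSet (hrf : Λ.RowFinite) (hS : IsCohnFamily Λ A S Ss)
    {v f : Λ.Path} {E : Finset Λ.Path} (hf : Λ.rng f = v)
    (hext : listProd (Λ.extSet hrf E f) (fun a => S (Λ.src f) - S a * Ss a) = 0) :
    listProd E (fun a => S v - S a * Ss a) * S f = 0 := by
  set R : Λ.Path → A := fun l => S (Λ.src f) - ∑ μ ∈ Λ.minExt hrf l f, S μ * Ss μ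
  have hR : listProd E R * listProd (Λ.extSet hrf E f) (fun a => S (Λ.src f) - S a * Ss a) =
      listProd E R := by
    refine mul_listProd_eq_self fun ν hν => ?_
    obtain ⟨l, hl, hν⟩ := KGraph.mem_extSet.1 hν
    refine listProd_mul_eq_self hl (hS.sub_sum_proj_mul_sub_proj hrf hν) fun l' _ => ?_
    have hνf := KGraph.rng_of_mem_minExt hν
    refine (Commute.sub_right (Commute.refl _) (hS.commute_vertex_proj hνf)).sub_left ?_
    exact Commute.sum_left _ _ _ fun μ hμ =>
      ((hS.commute_vertex_proj (KGraph.rng_of_mem_minExt hμ)).symm).sub_right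
        (hS.commute_proj hrf μ ν)
  rw [listProd_mul_eq_mul_listProd fun l _ => hS.sub_proj_mul_eq_mul_sub_sum hrf hf, ← hR, hext,
    mul_zero, mul_zero]

theorem listProd_eq_zero_of_isExhaustive (hrf : Λ.RowFinite) (hS : IsCohnFamily Λ A S Ss)
    (hedge : ∀ v, Λ.IsVertex v → ∀ E : Finset Λ.Path, ↑E ⊆ Λ.edgesAt v →
      Λ.IsExhaustive v ↑E → listProd E (fun e => S v - S e * Ss e) = 0)
    {v : Λ.Path} (hv : Λ.IsVertex v) {E : Finset Λ.Path} (hE : ∀ a ∈ E, Λ.rng a = v)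
    (hex : Λ.IsExhaustive v ↑E) : listProd E (fun a => S v - S a * Ss a) = 0 := by
  classical
  induction hM : E.sup Λ.deg using WellFoundedLT.induction generalizing v E with
  | _ M ih =>
  subst hM
  by_cases hvE : v ∈ E
  · exact listProd_eq_zero hvE (by rw [hS.ghost_vertex v hv, hS.vertex_idem v hv, sub_self])
  have hdeg : ∀ l ∈ E, Λ.deg l ≠ 0 := fun l hl hl0 =>
    hvE (by rwa [← hE l hl, Λ.rng_vertex l hl0])
  choose! e he r her hcomp using fun l hl => Λ.exists_edge_comp (hdeg l hl)
  have hrng : ∀ l ∈ E, Λ.rng (e l) = v := fun l hl => (he l hl).1.trans (hE l hl)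
  have hedges : ↑(E.image e) ⊆ Λ.edgesAt v := by
    simp only [Finset.coe_image, Set.image_subset_iff]
    exact fun l hl => hE l hl ▸ he l hl
  have hexF : Λ.IsExhaustive v ↑(E.image e) := hex.of_forall_mem_comp fun l hl =>
    ⟨e l, Finset.mem_image_of_mem e hl, r l, her l hl, hcomp l hl⟩
  set X := listProd E (fun a => S v - S a * Ss a)
  have hXF : ∀ f ∈ E.image e, X * (S v - S f * Ss f) = X := by
    simp only [Finset.mem_image, forall_exists_index, and_imp]
    rintro _ l hl rfl
    have hXe : X * S (e l) = 0 := hS.listProd_mul_eq_zero_of_extSet hrf (hrng l hl) <|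
      ih _ (KGraph.extSet_sup_deg_lt (by rwa [hcomp l hl]) (her l hl)
        (Λ.deg_ne_zero_of_mem_edgesAt (he l hl)))
        (Λ.deg_src _) (fun _ => KGraph.rng_of_mem_extSet) (hex.extSet (hrng l hl)) rfl
    rw [mul_sub, ← mul_assoc, hXe, zero_mul, sub_zero,
      hS.listProd_sub_proj_mul_vertex hv hE ⟨l, hl⟩]
  rw [← mul_listProd_eq_self hXF, hedge v hv _ hedges hexF, mul_zero]

end IsCohnFamily

theorem kp_family_iff_on_edges_general {k : ℕ} (Λ : KGraph k) (hrf : Λ.RowFinite)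
    (A : Type) [Ring A]
    (S Ss : Λ.Path → A) (hS : IsCohnFamily Λ A S Ss) :
    (∀ v, Λ.IsVertex v → ∀ E : Finset Λ.Path, (∀ a ∈ E, Λ.rng a = v) →
        Λ.IsExhaustive v ↑E →
        listProd E (fun a => S v - S a * Ss a) = 0) ↔
    (∀ v, Λ.IsVertex v → ∀ E : Finset Λ.Path, (↑E ⊆ Λ.edgesAt v) →
        Λ.IsExhaustive v ↑E →
        listProd E (fun e => S v - S e * Ss e) = 0) :=
  ⟨fun h v hv E hE hex => h v hv E (fun _ ha => (hE ha).1) hex,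
    fun h _ hv _ hE hex => hS.listProd_eq_zero_of_isExhaustive hrf h hv hE hex⟩

/-- Proposition: a Cohn `Λ`-family over a row-finite `k`-graph is a Kumjian–Pask
`Λ`-family (i.e. `∏_{λ∈E}(S_v - S_λ S_{λ*}) = 0` for all vertices `v` and all finite
exhaustive `E ⊆ vΛ`) if and only if `∏_{e∈E}(S_v - S_e S_{e*}) = 0` for all vertices
`v` and all exhaustive sets of edges `E ⊆ vΛ¹`. -/
theorem kp_family_iff_on_edges {k : ℕ} (Λ : KGraph k) (hrf : Λ.RowFinite)
    (R : Type) [CommRing R] (A : Type) [Ring A] [Algebra R A]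
    (S Ss : Λ.Path → A) (hS : IsCohnFamily Λ A S Ss) :
    (∀ v, Λ.IsVertex v → ∀ E : Finset Λ.Path, (∀ a ∈ E, Λ.rng a = v) →
        Λ.IsExhaustive v ↑E →
        listProd E (fun a => S v - S a * Ss a) = 0) ↔
    (∀ v, Λ.IsVertex v → ∀ E : Finset Λ.Path, (↑E ⊆ Λ.edgesAt v) →
        Λ.IsExhaustive v ↑E →
        listProd E (fun e => S v - S e * Ss e) = 0) :=
  kp_family_iff_on_edges_general Λ hrf A S Ss hS
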